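/- For any n ≥ 4 and any p > 1, λ_{1,p}(P_n) > λ_{1,p}(P_{n+1}), where P_n denotes the path graph on n vertices. -/

import Mathlib

open scoped Classical

noncomputable section

/-- The term `|f x - f y| ^ p` as a function on unordered pairs. -/
noncomputable def edgeTerm {V : Type*} (p : ℝ) (f : V → ℝ) : Sym2 V → ℝ :=
  Sym2.lift ⟨fun x y => |f x - f y| ^ p, fun x y => by dsimp only; rw [abs_sub_comm]⟩

/-- The `p`-Rayleigh quotient of a function on a finite graph. -/
noncomputable def rayleigh {V : Type*} [Fintype V] [DecidableEq V] (G : SimpleGraph V)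
    (p : ℝ) (f : V → ℝ) : ℝ :=
  (∑ e ∈ G.edgeFinset, edgeTerm p f e) / ∑ v, |f v| ^ p

/-- The first `p`-Dirichlet eigenvalue: infimum of the Rayleigh quotient over nonzero
functions vanishing on the boundary (vertices of degree one). -/
noncomputable def lambda1 {V : Type*} [Fintype V] [DecidableEq V] (G : SimpleGraph V)
    (p : ℝ) : ℝ :=
  sInf {r | ∃ f : V → ℝ, f ≠ 0 ∧ (∀ v, G.degree v = 1 → f v = 0) ∧ r = rayleigh G p f}

/-- The tadpole graph `T_{n,i}` on vertices `0,…,n-1` (vertex `t_k` is `k-1`):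
edges `t_k t_{k+1}` for `1 ≤ k ≤ n-1` together with the edge `t_1 t_i`. -/
def tadpole (n i : ℕ) : SimpleGraph (Fin n) :=
  SimpleGraph.fromRel (fun a b => a.val + 1 = b.val ∨ (a.val = 0 ∧ b.val = i - 1))

/-- The path graph on `n` vertices `0,…,n-1`. -/
def pathG (n : ℕ) : SimpleGraph (Fin n) :=
  SimpleGraph.fromRel (fun a b : Fin n => a.val + 1 = b.val)

/-- The set of edges of `G` with exactly one endpoint in `U`. -/
noncomputable def crossEdges {V : Type*} [Fintype V] [DecidableEq V] (G : SimpleGraph V)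
    (U : Finset V) : Finset (Sym2 V) :=
  G.edgeFinset.filter fun e =>
    Sym2.lift ⟨fun x y => (x ∈ U ∧ y ∉ U) ∨ (x ∉ U ∧ y ∈ U),
      fun x y => by simp only [eq_iff_iff]; tauto⟩ e

/-- The Dirichlet Cheeger constant: infimum of `|E(U,Uᶜ)|/|U|` over nonempty sets `U`
of interior vertices (vertices of degree at least two). -/
noncomputable def dCheeger {V : Type*} [Fintype V] [DecidableEq V] (G : SimpleGraph V) : ℝ :=
  sInf {r | ∃ U : Finset V, U.Nonempty ∧ (∀ v ∈ U, 2 ≤ G.degree v) ∧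
    r = ((crossEdges G U).card : ℝ) / U.card}

/-!
A minimizer `f` of the Rayleigh quotient on `P_n` exists by compactness of the normalized
admissible functions. Choose `m` with `f m ≠ 0` and duplicate that vertex: `f ∘ m.predAbove`
is admissible on `P_{n+1}`, has the same edge energy (the new edge joins two equal values) and
a `p`-mass larger by `|f m| ^ p`. The edge energy is positive since `f` vanishes at an endpoint
and is not identically zero, so the quotient strictly drops.
-/

open Finset

variable {p : ℝ}

lemma edgeTerm_smul {V : Type*} (c : ℝ) (f : V → ℝ) (e : Sym2 V) :
    edgeTerm p (c • f) e = |c| ^ p * edgeTerm p f e := by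
  induction e using Sym2.ind with
  | h x y =>
    change |c * f x - c * f y| ^ p = |c| ^ p * |f x - f y| ^ p
    rw [← mul_sub, abs_mul, Real.mul_rpow (abs_nonneg _) (abs_nonneg _)]

section

variable {V : Type*} [Fintype V]

lemma sum_abs_rpow_pos {f : V → ℝ} (hf : f ≠ 0) : 0 < ∑ v, |f v| ^ p := by
  obtain ⟨v, hv⟩ := Function.ne_iff.1 hf
  exact sum_pos' (fun w _ => by positivity)
    ⟨v, mem_univ v, Real.rpow_pos_of_pos (abs_pos.2 hv) p⟩

lemma sum_abs_rpow_smul (c : ℝ) (f : V → ℝ) :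
    ∑ v, |(c • f) v| ^ p = |c| ^ p * ∑ v, |f v| ^ p := by
  simp_rw [mul_sum, Pi.smul_apply, smul_eq_mul, abs_mul,
    Real.mul_rpow (abs_nonneg _) (abs_nonneg _)]

lemma rayleigh_smul [DecidableEq V] (G : SimpleGraph V) {c : ℝ} (hc : c ≠ 0) (f : V → ℝ) :
    rayleigh G p (c • f) = rayleigh G p f := by
  simp_rw [rayleigh, sum_abs_rpow_smul, edgeTerm_smul, ← mul_sum]
  exact mul_div_mul_left _ _ (by positivity)

lemma rayleigh_nonneg [DecidableEq V] (G : SimpleGraph V) (f : V → ℝ) :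
    0 ≤ rayleigh G p f := by
  refine div_nonneg (sum_nonneg fun e _ => ?_) (sum_nonneg fun v _ => by positivity)
  induction e using Sym2.ind with
  | h x y => exact Real.rpow_nonneg (abs_nonneg _) p

lemma lambda1_le_rayleigh [DecidableEq V] (G : SimpleGraph V) {f : V → ℝ} (hf : f ≠ 0)
    (hB : ∀ v, G.degree v = 1 → f v = 0) :
    lambda1 G p ≤ rayleigh G p f :=
  csInf_le ⟨0, by rintro r ⟨g, -, -, rfl⟩; exact rayleigh_nonneg G g⟩ ⟨f, hf, hB, rfl⟩

lemma continuous_sum_abs_rpow (hp : 0 ≤ p) :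
    Continuous fun f : V → ℝ => ∑ v, |f v| ^ p :=
  continuous_finsetSum _ fun v _ => (Real.continuous_rpow_const hp).comp (continuous_apply v).abs

lemma continuousOn_rayleigh [DecidableEq V] (G : SimpleGraph V) (hp : 0 ≤ p) :
    ContinuousOn (rayleigh G p) {f | f ≠ 0} := by
  refine Continuous.continuousOn (continuous_finsetSum _ fun e _ => ?_) |>.div
    (continuous_sum_abs_rpow hp).continuousOn fun f hf => (sum_abs_rpow_pos hf).ne'
  induction e using Sym2.ind with
  | h x y =>
    exact (Real.continuous_rpow_const hp).comp ((continuous_apply x).sub (continuous_apply y)).abs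

lemma exists_rayleigh_eq_lambda1 [DecidableEq V] (G : SimpleGraph V) (hp : 0 < p)
    {v₀ : V} (hv₀ : G.degree v₀ ≠ 1) :
    ∃ f : V → ℝ, f ≠ 0 ∧ (∀ v, G.degree v = 1 → f v = 0) ∧
      rayleigh G p f = lambda1 G p := by
  set K : Set (V → ℝ) := {f | (∀ v, G.degree v = 1 → f v = 0) ∧ ∑ v, |f v| ^ p = 1}
  have hK0 : ∀ f ∈ K, f ≠ 0 := by
    rintro f ⟨-, hf⟩ rfl
    simp [Real.zero_rpow hp.ne'] at hf
  have normalize : ∀ g : V → ℝ, g ≠ 0 → (∀ v, G.degree v = 1 → g v = 0) →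
      ∃ c : ℝ, c ≠ 0 ∧ c • g ∈ K := by
    intro g hg hB
    set D := ∑ v, |g v| ^ p
    have hD : 0 < D := sum_abs_rpow_pos hg
    refine ⟨D ^ (-p⁻¹), (Real.rpow_pos_of_pos hD _).ne', fun v hv => by simp [hB v hv], ?_⟩
    rw [sum_abs_rpow_smul, abs_of_pos (Real.rpow_pos_of_pos hD _), ← Real.rpow_mul hD.le,
      neg_mul, inv_mul_cancel₀ hp.ne', Real.rpow_neg_one, inv_mul_cancel₀ hD.ne']
  have hKclosed : IsClosed K := by
    have hbdry : IsClosed {f : V → ℝ | ∀ v, G.degree v = 1 → f v = 0} := by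
      simp only [Set.ofPred_forall]
      exact isClosed_iInter fun v => isClosed_iInter fun _ =>
        isClosed_eq (continuous_apply v) continuous_const
    exact hbdry.inter (isClosed_eq (continuous_sum_abs_rpow hp.le) continuous_const)
  have hKcube : K ⊆ Set.univ.pi fun _ => Set.Icc (-1) 1 := by
    rintro f ⟨-, hf⟩ v -
    refine abs_le.1 ((Real.rpow_le_rpow_iff (abs_nonneg _) zero_le_one hp).1 ?_)
    rw [Real.one_rpow, ← hf]
    exact single_le_sum (f := fun w => |f w| ^ p) (fun w _ => by positivity) (mem_univ v)
  have hKcompact : IsCompact K :=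
    (isCompact_univ_pi fun _ => isCompact_Icc).of_isClosed_subset hKclosed hKcube
  have hadm : (Pi.single v₀ 1 : V → ℝ) ≠ 0 ∧
      ∀ v, G.degree v = 1 → (Pi.single v₀ 1 : V → ℝ) v = 0 :=
    ⟨by simp, fun v hv => Pi.single_eq_of_ne (by rintro rfl; exact hv₀ hv) _⟩
  obtain ⟨c, -, hcK⟩ := normalize _ hadm.1 hadm.2
  obtain ⟨f, hfK, hmin⟩ := hKcompact.exists_isMinOn ⟨_, hcK⟩
    ((continuousOn_rayleigh G hp.le).mono hK0)
  refine ⟨f, hK0 f hfK, hfK.1, le_antisymm ?_ (lambda1_le_rayleigh G (hK0 f hfK) hfK.1)⟩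
  refine le_csInf ⟨_, f, hK0 f hfK, hfK.1, rfl⟩ ?_
  rintro r ⟨g, hg, hB, rfl⟩
  obtain ⟨c, hc, hcK⟩ := normalize g hg hB
  exact (hmin hcK).trans_eq (rayleigh_smul G hc g)

end

lemma pathG_adj {N : ℕ} {a b : Fin N} :
    (pathG N).Adj a b ↔ a.val + 1 = b.val ∨ b.val + 1 = a.val := by
  simp only [pathG, SimpleGraph.fromRel_adj, ne_eq, and_iff_right_iff_imp]
  rintro h rfl
  omega

lemma pathG_degree_eq_one_iff {N : ℕ} (hN : 0 < N) (v : Fin (N + 1)) :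
    (pathG (N + 1)).degree v = 1 ↔ v = 0 ∨ v = Fin.last N := by
  simp only [SimpleGraph.degree_eq_one_iff_existsUnique_adj, pathG_adj, Fin.ext_iff,
    Fin.val_zero, Fin.val_last]
  constructor
  · rintro ⟨w, -, huniq⟩
    by_contra! hv
    have h1 := huniq ⟨v.val - 1, by omega⟩ (Or.inr (by dsimp only; omega))
    have h2 := huniq ⟨v.val + 1, by omega⟩ (Or.inl rfl)
    simp only [Fin.ext_iff] at h1 h2
    omega
  · rintro (hv | hv)
    · exact ⟨⟨1, by omega⟩, Or.inl (by dsimp only; omega),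
        fun w hw => Fin.ext (by dsimp only; omega)⟩
    · exact ⟨⟨N - 1, by omega⟩, Or.inr (by dsimp only; omega),
        fun w hw => Fin.ext (by dsimp only; omega)⟩

lemma sum_edgeFinset_pathG {M : Type*} [AddCommMonoid M] {N : ℕ} (φ : Sym2 (Fin (N + 1)) → M) :
    ∑ e ∈ (pathG (N + 1)).edgeFinset, φ e = ∑ i : Fin N, φ s(i.castSucc, i.succ) := by
  have hedges : (pathG (N + 1)).edgeFinset = univ.image fun i : Fin N => s(i.castSucc, i.succ) := by
    ext e
    induction e using Sym2.ind with
    | h a b =>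
      simp only [SimpleGraph.mem_edgeFinset, SimpleGraph.mem_edgeSet, pathG_adj, mem_image,
        mem_univ, true_and, Sym2.eq_iff, Fin.ext_iff, Fin.val_castSucc, Fin.val_succ]
      constructor
      · rintro (h | h)
        · exact ⟨⟨a.val, by omega⟩, Or.inl ⟨rfl, h⟩⟩
        · exact ⟨⟨b.val, by omega⟩, Or.inr ⟨rfl, h⟩⟩
      · rintro ⟨i, h | h⟩ <;> omega
  rw [hedges, sum_image]
  intro i _ j _ hij
  simp only [Sym2.eq_iff, Fin.ext_iff, Fin.val_castSucc, Fin.val_succ] at hij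
  ext; omega

lemma Fin.sum_comp_predAbove {M : Type*} [AddCommMonoid M] {n : ℕ} (m : Fin n) (h : Fin n → M) :
    ∑ k : Fin (n + 1), h (m.predAbove k) = h m + ∑ v, h v := by
  simp [Fin.sum_univ_succAbove _ m.castSucc, Fin.predAbove_succAbove]

lemma Fin.sum_comp_predAbove_castSucc_succ {M : Type*} [AddCommMonoid M] {N : ℕ}
    (m : Fin (N + 1)) (φ : Fin (N + 1) → Fin (N + 1) → M) :
    ∑ i : Fin (N + 1), φ (m.predAbove i.castSucc) (m.predAbove i.succ) =
      φ m m + ∑ j : Fin N, φ j.castSucc j.succ := by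
  rw [Fin.sum_univ_succAbove _ m, Fin.predAbove_castSucc_self, Fin.predAbove_succ_self]
  congr 1
  refine sum_congr rfl fun j _ => ?_
  rcases lt_or_ge j.castSucc m with hj | hj
  · rw [Fin.succAbove_of_castSucc_lt _ _ hj, Fin.predAbove_castSucc_of_le _ _ hj.le,
      Fin.succ_castSucc, Fin.predAbove_castSucc_of_le _ _ (Fin.castSucc_lt_iff_succ_le.1 hj)]
  · rw [Fin.succAbove_of_le_castSucc _ _ hj, ← Fin.succ_castSucc,
      Fin.predAbove_succ_of_le _ _ hj,
      Fin.predAbove_succ_of_le _ _ (hj.trans (Fin.castSucc_le_succ j))]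

lemma rayleigh_pathG {N : ℕ} (f : Fin (N + 1) → ℝ) :
    rayleigh (pathG (N + 1)) p f =
      (∑ i : Fin N, |f i.castSucc - f i.succ| ^ p) / ∑ v, |f v| ^ p := by
  rw [rayleigh, sum_edgeFinset_pathG]
  rfl

lemma sum_abs_castSucc_sub_succ_rpow_pos {N : ℕ} (hp : p ≠ 0) {f : Fin (N + 1) → ℝ}
    (h0 : f 0 = 0) (hf : f ≠ 0) : 0 < ∑ i : Fin N, |f i.castSucc - f i.succ| ^ p := by
  refine (sum_nonneg fun i _ => by positivity).lt_of_ne' fun hsum => hf ?_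
  have hstep : ∀ i : Fin N, f i.succ = f i.castSucc := fun i => by
    have := (sum_eq_zero_iff_of_nonneg fun i _ => by positivity).1 hsum i (mem_univ i)
    rw [Real.rpow_eq_zero (abs_nonneg _) hp, abs_eq_zero, sub_eq_zero] at this
    exact this.symm
  funext v
  induction v using Fin.induction with
  | zero => exact h0
  | succ i ih => rw [Pi.zero_apply, hstep, ih, Pi.zero_apply]

lemma rayleigh_pathG_comp_predAbove_lt {N : ℕ} (hp : p ≠ 0) {f : Fin (N + 1) → ℝ}
    (h0 : f 0 = 0) {m : Fin (N + 1)} (hm : f m ≠ 0) :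
    rayleigh (pathG (N + 1 + 1)) p (f ∘ m.predAbove) < rayleigh (pathG (N + 1)) p f := by
  have hf : f ≠ 0 := fun h => hm (congrFun h m)
  rw [rayleigh_pathG, rayleigh_pathG]
  simp only [Function.comp_apply]
  rw [Fin.sum_comp_predAbove_castSucc_succ m (fun a b => |f a - f b| ^ p),
    Fin.sum_comp_predAbove m (fun v => |f v| ^ p), sub_self, abs_zero, Real.zero_rpow hp, zero_add]
  exact div_lt_div_of_pos_left (sum_abs_castSucc_sub_succ_rpow_pos hp h0 hf) (sum_abs_rpow_pos hf)
    (lt_add_of_pos_left _ (Real.rpow_pos_of_pos (abs_pos.2 hm) p))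

/-- The first `p`-Dirichlet eigenvalue of the path graph is strictly decreasing in
the number of vertices. -/
theorem path_gt_longer_path (n : ℕ) (hn : 4 ≤ n) {p : ℝ} (hp : 1 < p) :
    lambda1 (pathG n) p > lambda1 (pathG (n + 1)) p := by
  obtain ⟨N, rfl⟩ : ∃ N, n = N + 1 := ⟨n - 1, by omega⟩
  have hp0 : 0 < p := by linarith
  have hN : 0 < N := by omega
  have hinterior : (pathG (N + 1)).degree ⟨1, by omega⟩ ≠ 1 := by
    rw [ne_eq, pathG_degree_eq_one_iff hN]
    simp only [Fin.ext_iff, Fin.val_zero, Fin.val_last]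
    omega
  obtain ⟨f, hf, hB, hfmin⟩ := exists_rayleigh_eq_lambda1 (pathG (N + 1)) hp0 hinterior
  obtain ⟨m, hm⟩ := Function.ne_iff.1 hf
  have h0 : f 0 = 0 := hB 0 ((pathG_degree_eq_one_iff hN 0).2 (Or.inl rfl))
  have hBg : ∀ v, (pathG (N + 1 + 1)).degree v = 1 → (f ∘ m.predAbove) v = 0 := by
    intro v hv
    rcases (pathG_degree_eq_one_iff N.succ_pos v).1 hv with rfl | rfl
    · simpa using h0
    · simpa using hB _ ((pathG_degree_eq_one_iff hN _).2 (Or.inr rfl))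
  calc lambda1 (pathG (N + 1 + 1)) p
      ≤ rayleigh (pathG (N + 1 + 1)) p (f ∘ m.predAbove) :=
        lambda1_le_rayleigh _ (fun h => hm (by simpa using congrFun h m.castSucc)) hBg
    _ < rayleigh (pathG (N + 1)) p f := rayleigh_pathG_comp_predAbove_lt hp0.ne' h0 hm
    _ = lambda1 (pathG (N + 1)) p := hfmin
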